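/- Let d be an n-distance on X that is nonincreasing under identification of variables, and let k ∈ {2,…,n} and K > 0 be such that d(x₁,…,xₙ) ≤ K·∑_{i=1}^k d(x₁,…,xₙ)ᵢᶻ for all arguments. Then for any n₁,…,n_k ≥ 1 with n₁+⋯+n_k = n, the map d'(x₁,…,x_k) = d(n₁·x₁,…,n_k·x_k) satisfies d'(x₁,…,x_k) ≤ K·∑_{i=1}^k d'(x₁,…,x_k)ᵢᶻ for all x₁,…,x_k,z ∈ X. -/

import Mathlib

/-!
Let `g : Fin n → Fin k` send each position of the blow-up to its block, so that
`blowup m hsum y = y ∘ g`, and let `r` pick one position in each block (possible because every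
`m j ≥ 1`). Precomposing with an idempotent map of `Fin n` only identifies coordinates with fixed
ones, so it does not increase `d`. Hence `d (x ∘ g) ≤ d x̃`, where `x̃` is `x` on the positions `r`
and `z` elsewhere. The partial simplex inequality, moved by symmetry onto the positions `r`,
bounds `d x̃` by `K * ∑ i, d (update x̃ (r i) z)`, and each `update x̃ (r i) z` arises from
`update x i z ∘ g` by identifying coordinates, since `z` is the value of `update x i z` on
block `i`.
-/

open Finset Function

/-- `d` is an `n`-distance: nonnegative, vanishing exactly on constant tuples,
symmetric, and satisfying the simplex inequality. -/
structure IsNDistance {X : Type*} {n : ℕ} (d : (Fin n → X) → ℝ) : Prop where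
  nonneg : ∀ x, 0 ≤ d x
  eq_zero_iff : ∀ x, d x = 0 ↔ ∀ i j : Fin n, x i = x j
  symm : ∀ (x : Fin n → X) (σ : Equiv.Perm (Fin n)), d (x ∘ σ) = d x
  simplex : ∀ (x : Fin n → X) (z : X), d x ≤ ∑ i, d (Function.update x i z)

/-- The \$n\$-tuple obtained by repeating each \$x_j\$ exactly \$m_j\$ times. -/
def blowup {X : Type*} {k n : ℕ} (m : Fin k → ℕ) (h : ∑ j, m j = n) (x : Fin k → X) :
    Fin n → X :=
  fun i => ((List.finRange k).flatMap fun j => List.replicate (m j) (x j)).get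
    (Fin.cast (by rw [List.length_flatMap, ← h, Fin.sum_univ_def]; congr 1;
                  simp [Function.comp_def]) i)

namespace Function

variable {α β γ : Type*} {f : α → β} {g : β → α}

theorem update_extend_const [DecidableEq α] [DecidableEq β] (hf : Injective f) (x : α → γ)
    (a : α) (c : γ) :
    update (extend f x fun _ ↦ c) (f a) c = extend f (update x a c) fun _ ↦ c := by
  funext b
  by_cases hb : ∃ a', f a' = b
  · obtain ⟨a', rfl⟩ := hb
    simp only [update_apply, hf.eq_iff, hf.extend_apply]
  · rw [update_of_ne, extend_apply' _ _ _ hb, extend_apply' _ _ _ hb]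
    rintro rfl
    exact hb ⟨a, rfl⟩

theorem LeftInverse.comp_comp_extend_id (hgf : LeftInverse g f) (y : α → γ) (a : α) :
    (y ∘ g) ∘ f ∘ extend f id (fun _ ↦ a) = extend f y fun _ ↦ y a := by
  funext b
  rw [comp_apply, comp_apply, comp_apply, hgf, apply_extend y]
  rfl

end Function

theorem Fin.sum_filter_val_lt {M : Type*} [AddCommMonoid M] {k n : ℕ} (h : k ≤ n)
    (f : Fin n → M) :
    ∑ i ∈ univ.filter (fun i : Fin n ↦ (i : ℕ) < k), f i = ∑ i : Fin k, f (Fin.castLE h i) := by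
  have : univ.filter (fun i : Fin n ↦ (i : ℕ) < k) = univ.map (Fin.castLEEmb h) := by
    ext i
    simp only [mem_filter, mem_univ, true_and, mem_map, Fin.castLEEmb_apply]
    exact ⟨fun hi ↦ ⟨⟨i, hi⟩, rfl⟩, fun ⟨j, hj⟩ ↦ hj ▸ j.2⟩
  rw [this, sum_map]
  rfl

section blowup

variable {X : Type*} {k n : ℕ} (m : Fin k → ℕ) (h : ∑ j, m j = n)

theorem blowup_eq_comp (x : Fin k → X) : blowup m h x = x ∘ blowup m h id := by
  funext i
  have hmap : ((List.finRange k).flatMap fun j ↦ List.replicate (m j) (x j)) =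
      ((List.finRange k).flatMap fun j ↦ List.replicate (m j) (id j)).map x := by
    simp [List.map_flatMap, List.map_replicate]
  simp only [blowup, comp_apply, List.get_eq_getElem]
  rw [List.getElem_of_eq hmap, List.getElem_map]
  rfl

theorem blowup_id_surjective (hm : ∀ j, 1 ≤ m j) : Surjective (blowup m h id) := by
  intro j
  have hj : j ∈ (List.finRange k).flatMap fun j ↦ List.replicate (m j) (id j) := by
    simpa [List.mem_flatMap, Nat.one_le_iff_ne_zero] using hm j
  have hlen : ((List.finRange k).flatMap fun j ↦ List.replicate (m j) (id j)).length = n := by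
    simp [List.length_flatMap, ← h, Fin.sum_univ_def]
  obtain ⟨p, hpj⟩ := List.mem_iff_get.1 hj
  exact ⟨Fin.cast hlen p, hpj⟩

end blowup

section Identification

variable {X : Type*} {n : ℕ} {d : (Fin n → X) → ℝ}

theorem comp_idempotent_le
    (hident : ∀ (w : Fin n → X) (a b : Fin n), a ≠ b → d (update w a (w b)) ≤ d w)
    (w : Fin n → X) {φ : Fin n → Fin n} (hφ : ∀ p, φ (φ p) = φ p) : d (w ∘ φ) ≤ d w := by
  obtain ⟨S, hS⟩ : ∃ S : Finset (Fin n), ∀ p ∉ S, φ p = p :=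
    ⟨univ, fun p hp ↦ absurd (mem_univ p) hp⟩
  induction S using Finset.induction_on generalizing φ w with
  | empty =>
    rw [show φ = id from funext fun p ↦ hS p (notMem_empty p), comp_id]
  | insert a S _ ih =>
    by_cases hfa : φ a = a
    · refine ih w hφ fun p hp ↦ ?_
      rcases eq_or_ne p a with rfl | hpa
      · exact hfa
      · exact hS p (by simp [hpa, hp])
    -- `a` is not a value of `φ`, so `w ∘ φ` also factors through the idempotent `update φ a a`.
    have hna : ∀ p, φ p ≠ a := fun p hp ↦ hfa (by rw [← hp, hφ])
    calc d (w ∘ φ) = d (update w a (w (φ a)) ∘ update φ a a) := by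
          congr 1
          funext p
          rcases eq_or_ne p a with rfl | hpa
          · simp
          · simp [update_of_ne hpa, update_of_ne (hna p)]
      _ ≤ d (update w a (w (φ a))) := by
          refine ih _ (fun p ↦ ?_) fun p hp ↦ ?_
          · rcases eq_or_ne p a with rfl | hpa
            · simp
            · simp [update_of_ne hpa, update_of_ne (hna p), hφ]
          · rcases eq_or_ne p a with rfl | hpa
            · simp
            · rw [update_of_ne hpa, hS p (by simp [hpa, hp])]
      _ ≤ d w := hident w a (φ a) (Ne.symm hfa)

theorem comp_leftInverse_le
    (hident : ∀ (w : Fin n → X) (a b : Fin n), a ≠ b → d (update w a (w b)) ≤ d w)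
    {k : ℕ} {r : Fin k → Fin n} {h : Fin n → Fin k} (hhr : LeftInverse h r) (w : Fin n → X) :
    d (w ∘ r ∘ h) ≤ d w :=
  comp_idempotent_le hident w fun p ↦ congrArg r (hhr (h p))

end Identification

namespace IsNDistance

variable {X : Type*} {n : ℕ} {d : (Fin n → X) → ℝ}

theorem update_apply_le (hd : IsNDistance d) {a₀ b₀ : Fin n} (h₀ : a₀ ≠ b₀)
    (hni : ∀ x : Fin n → X, d (update x a₀ (x b₀)) ≤ d x)
    (w : Fin n → X) {a b : Fin n} (hab : a ≠ b) : d (update w a (w b)) ≤ d w := by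
  obtain ⟨σ, hσa, hσb⟩ := MulAction.is_two_pretransitive_iff.1
    (Equiv.Perm.isMultiplyPretransitive (Fin n) 2) h₀ hab
  rw [Equiv.Perm.smul_def] at hσa hσb
  calc d (update w a (w b)) = d (update w a (w b) ∘ σ) := (hd.symm _ σ).symm
    _ = d (update (w ∘ σ) a₀ ((w ∘ σ) b₀)) := by
      rw [update_comp_equiv, ← hσa, σ.symm_apply_apply, comp_apply, hσb]
    _ ≤ d (w ∘ σ) := hni _
    _ = d w := hd.symm w σ

theorem le_mul_sum_update_of_injective (hd : IsNDistance d) {k : ℕ} {K : ℝ}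
    (hpart : ∀ (x : Fin n → X) (z : X),
      d x ≤ K * ∑ i ∈ univ.filter (fun i : Fin n ↦ (i : ℕ) < k), d (update x i z))
    {e : Fin k → Fin n} (he : Injective e) (x : Fin n → X) (z : X) :
    d x ≤ K * ∑ i, d (update x (e i) z) := by
  have hk : k ≤ n := Fin.le_of_injective e he
  obtain ⟨σ, hσ⟩ := Equiv.Perm.exists_extending_pair _ e (Fin.castLE_injective hk) he
  calc d x = d (x ∘ σ) := (hd.symm x σ).symm
    _ ≤ K * ∑ i ∈ univ.filter (fun i : Fin n ↦ (i : ℕ) < k), d (update (x ∘ σ) i z) := hpart _ z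
    _ = K * ∑ i, d (update x (e i) z) := by
      rw [Fin.sum_filter_val_lt hk]
      congr 1
      refine sum_congr rfl fun i _ ↦ ?_
      rw [← hσ i, ← hd.symm (update x (σ (Fin.castLE hk i)) z) σ, update_comp_equiv,
        σ.symm_apply_apply]

end IsNDistance

/-- A nonincreasing-under-identification $n$-distance satisfying a partial simplex inequality
with constant $K$ satisfies the strong $k$-simplex inequality with the same constant. -/
theorem nonincreasing_strong_simplex {X : Type*} {n : ℕ} (hn : 2 ≤ n)
    (d : (Fin n → X) → ℝ) (hd : IsNDistance d)
    (hni : ∀ x : Fin n → X,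
      d (Function.update x ⟨n - 1, by omega⟩ (x ⟨0, by omega⟩)) ≤ d x)
    (k : ℕ) (K : ℝ) (hK : 0 < K)
    (hpart : ∀ (x : Fin n → X) (z : X),
      d x ≤ K * ∑ i ∈ Finset.univ.filter (fun i : Fin n => (i : ℕ) < k),
        d (Function.update x i z))
    (m : Fin k → ℕ) (hm : ∀ j, 1 ≤ m j) (hsum : ∑ j, m j = n) :
    ∀ (x : Fin k → X) (z : X),
      d (blowup m hsum x) ≤ K * ∑ i : Fin k, d (blowup m hsum (Function.update x i z)) := by
  intro x z
  have hident : ∀ (w : Fin n → X) (a b : Fin n), a ≠ b → d (update w a (w b)) ≤ d w :=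
    fun w _ _ ↦ hd.update_apply_le (by simp only [ne_eq, Fin.mk.injEq]; omega) hni w
  set g := blowup m hsum id
  obtain ⟨r, hgr⟩ : ∃ r, LeftInverse g r := (blowup_id_surjective m hsum hm).hasRightInverse
  have hr : Injective r := hgr.injective
  have hg : ∀ y : Fin k → X, blowup m hsum y = y ∘ g := blowup_eq_comp m hsum
  calc d (blowup m hsum x) = d ((extend r x fun _ ↦ z) ∘ r ∘ g) := by
        rw [hg, ← comp_assoc, extend_comp hr]
    _ ≤ d (extend r x fun _ ↦ z) := comp_leftInverse_le hident hgr _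
    _ ≤ K * ∑ i, d (update (extend r x fun _ ↦ z) (r i) z) :=
        hd.le_mul_sum_update_of_injective hpart hr _ z
    _ = K * ∑ i, d ((update x i z ∘ g) ∘ r ∘ extend r id fun _ ↦ i) := by
        simp only [update_extend_const hr, hgr.comp_comp_extend_id, update_self]
    _ ≤ K * ∑ i, d (blowup m hsum (update x i z)) := by
        gcongr with i
        rw [hg]
        exact comp_leftInverse_le hident (hr.extend_apply id _) _
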